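/- Let S be a finite set, α > 0, π_pre and p* probability distributions on S with full support, and π a probability distribution on S with full support. Define Ω_π(x) = (1/α)·log π(x) + (1 − 1/α)·log π_pre(x). If for all x_A, x_B ∈ S, σ(log p*(x_A) − log p*(x_B)) = σ(Ω_π(x_A) − Ω_π(x_B)), then there exists c > 0 such that π(x) = c · π_pre(x)^{1−α} · p*(x)^{α} for all x ∈ S. -/

import Mathlib

noncomputable def sigm (t : ℝ) : ℝ := 1 / (1 + Real.exp (-t))

/-! Since `σ` is injective, the hypothesis says that `log p*` and `Ω_π` differ by a constant.
Solving `Ω_π` for `log π` shows that `log π - α log p* - (1 - α) log π_pre` is constant too,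
and exponentiating that constant gives `c`. -/

section

open Real

lemma sigm_eq_sigmoid : sigm = sigmoid := by
  ext t
  rw [sigm, sigmoid_def, one_div]

lemma sigm_injective : Function.Injective sigm :=
  sigm_eq_sigmoid ▸ sigmoid_injective

lemma exists_eq_add_const_of_sub_eq_sub {ι : Type*} {f g : ι → ℝ}
    (h : ∀ x y, f x - f y = g x - g y) : ∃ C, ∀ x, f x = g x + C := by
  rcases isEmpty_or_nonempty ι with _ | ⟨⟨y⟩⟩
  · exact ⟨0, isEmptyElim⟩
  · exact ⟨f y - g y, fun x => by linarith [h x y]⟩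

lemma exp_mul_log_add_mul_log_add {a b : ℝ} (ha : 0 < a) (hb : 0 < b) (s t C : ℝ) :
    exp (s * log a + t * log b + C) = exp C * a ^ s * b ^ t := by
  rw [rpow_def_of_pos ha, rpow_def_of_pos hb, ← exp_add, ← exp_add]
  ring_nf

end

theorem stmt_8_general {S : Type*}
    (α : ℝ) (hα : 0 < α)
    (πpre pstar π : S → ℝ)
    (hprepos : ∀ x, 0 < πpre x)
    (hppos : ∀ x, 0 < pstar x)
    (hπpos : ∀ x, 0 < π x)
    (h : ∀ xA xB : S,
      sigm (Real.log (pstar xA) - Real.log (pstar xB)) =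
      sigm (((1 / α) * Real.log (π xA) + (1 - 1 / α) * Real.log (πpre xA)) -
            ((1 / α) * Real.log (π xB) + (1 - 1 / α) * Real.log (πpre xB)))) :
    ∃ c : ℝ, 0 < c ∧ ∀ x : S, π x = c * πpre x ^ (1 - α) * pstar x ^ α := by
  have hlog : ∀ x y, Real.log (π x) - Real.log (π y) =
      ((1 - α) * Real.log (πpre x) + α * Real.log (pstar x)) -
        ((1 - α) * Real.log (πpre y) + α * Real.log (pstar y)) := by
    intro x y
    have hxy := sigm_injective (h x y)
    field_simp at hxy
    linarith
  obtain ⟨C, hC⟩ := exists_eq_add_const_of_sub_eq_sub hlog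
  refine ⟨Real.exp C, Real.exp_pos C, fun x => ?_⟩
  rw [← Real.exp_log (hπpos x), hC x, exp_mul_log_add_mul_log_add (hprepos x) (hppos x)]

theorem stmt_8 {S : Type*} [Fintype S] [Nonempty S]
    (α : ℝ) (hα : 0 < α)
    (πpre pstar π : S → ℝ)
    (hprepos : ∀ x, 0 < πpre x) (hpresum : ∑ x, πpre x = 1)
    (hppos : ∀ x, 0 < pstar x) (hpsum : ∑ x, pstar x = 1)
    (hπpos : ∀ x, 0 < π x) (hπsum : ∑ x, π x = 1)
    (h : ∀ xA xB : S,
      sigm (Real.log (pstar xA) - Real.log (pstar xB)) =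
      sigm (((1 / α) * Real.log (π xA) + (1 - 1 / α) * Real.log (πpre xA)) -
            ((1 / α) * Real.log (π xB) + (1 - 1 / α) * Real.log (πpre xB)))) :
    ∃ c : ℝ, 0 < c ∧ ∀ x : S, π x = c * πpre x ^ (1 - α) * pstar x ^ α :=
  stmt_8_general α hα πpre pstar π hprepos hppos hπpos h
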